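/- The block space $BH^{p,s}_w$ is complete: for $0<p<\infty$, $0<s\leq\infty$ and any weight $w$, every Cauchy sequence in the quasi-norm $\|\cdot\|_{BH^{p,s}_w}$ converges in $BH^{p,s}_w$. -/

import Mathlib

open MeasureTheory
open scoped ENNReal

noncomputable section

/-- The cube centered at `c` with side length `2*l`. -/
def Cube (n : ℕ) (c : Fin n → ℝ) (l : ℝ) : Set (Fin n → ℝ) := {y | ∀ i, |y i - c i| ≤ l}

/-- `w(E) = ∫_E w`. -/
def wMeas {n : ℕ} (w : (Fin n → ℝ) → ℝ) (E : Set (Fin n → ℝ)) : ℝ := ∫ x in E, w x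

/-- A `(p,s,w)`-block: supported in a cube `Q` with `‖h‖_{L^s} ≤ |Q|^{1/s} w(Q)^{-1/p}`. -/
def IsBlock {n : ℕ} (p : ℝ) (s : ℝ≥0∞) (w : (Fin n → ℝ) → ℝ)
    (h : (Fin n → ℝ) → ℝ) : Prop :=
  AEMeasurable h volume ∧
  ∃ (c : Fin n → ℝ) (l : ℝ), 0 < l ∧ Function.support h ⊆ Cube n c l ∧
    eLpNorm h s volume ≤ (volume (Cube n c l)) ^ (1/s).toReal *
      (ENNReal.ofReal (wMeas w (Cube n c l))) ^ (-(1/p))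

/-- A block decomposition of `f` with coefficients `lam` and blocks `h`. -/
def BHdecomp {n : ℕ} (p : ℝ) (s : ℝ≥0∞) (w : (Fin n → ℝ) → ℝ)
    (f : (Fin n → ℝ) → ℝ) (lam : ℕ → ℝ) (h : ℕ → (Fin n → ℝ) → ℝ) : Prop :=
  (∀ k, IsBlock p s w (h k)) ∧ Summable (fun k => |lam k| ^ min p 1) ∧
    ∀ᵐ x ∂volume, HasSum (fun k => lam k * h k x) (f x)

/-- Membership in the block space `BH^{p,s}_w`. -/
def MemBH {n : ℕ} (p : ℝ) (s : ℝ≥0∞) (w : (Fin n → ℝ) → ℝ)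
    (f : (Fin n → ℝ) → ℝ) : Prop :=
  ∃ lam h, BHdecomp p s w f lam h

/-- The quasi-norm of the block space `BH^{p,s}_w`. -/
def BHnorm {n : ℕ} (p : ℝ) (s : ℝ≥0∞) (w : (Fin n → ℝ) → ℝ)
    (f : (Fin n → ℝ) → ℝ) : ℝ :=
  sInf { t | ∃ lam h, BHdecomp p s w f lam h ∧
    t = (∑' k, |lam k| ^ min p 1) ^ (1 / min p 1) }

/-!
Write `q = min p 1`. Pass to a subsequence `f (κ J)` whose consecutive differences have block
decompositions `∑ᵢ λ_{j,i} h_{j,i}` with `∑ᵢ |λ_{j,i}|^q ≤ 2^{-j}`, and put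
`g = f (κ 0) + ∑_{j,i} λ_{j,i} h_{j,i}`. Where this double series converges absolutely,
`f (κ J) - g` is minus its tail beyond row `J`, whose coefficients are small. Elsewhere the
`tsum` defining `g` is `0`, so `g = f (κ 0)` there; but there `∑ |λ_{j,i} h_{j,i}(x)| = ∞`,
and this divergence lets any function be expanded in blocks dominated by the `h_{j,i}` with
coefficients `θ λ_{j,i}` for an arbitrarily small `θ > 0`.
-/

open Filter Finset

def truncate (S y : ℝ) : ℝ := max (-S) (min S y)

lemma truncate_zero_left (y : ℝ) : truncate 0 y = 0 := by
  simp [truncate]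

lemma truncate_of_abs_le {S y : ℝ} (h : |y| ≤ S) : truncate S y = y := by
  rw [abs_le] at h
  simp [truncate, h.1, h.2]

lemma abs_truncate_sub_truncate_le (S S' y : ℝ) :
    |truncate S y - truncate S' y| ≤ |S - S'| := by
  refine (abs_max_sub_max_le_max _ _ _ _).trans (max_le ?_ ?_)
  · rw [neg_sub_neg, abs_sub_comm]
  · simpa using abs_min_sub_min_le_max S y S' y

lemma hasSum_truncate_sub {c : ℕ → ℝ} (hc : ∀ m, 0 ≤ c m) {y : ℝ}
    (hy : y ≠ 0 → ¬Summable c) :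
    HasSum (fun m => truncate (∑ i ∈ range (m + 1), c i) y - truncate (∑ i ∈ range m, c i) y)
      y := by
  obtain ⟨M, hM⟩ : ∃ M, ∀ m ≥ M, |y| ≤ ∑ i ∈ range m, c i := by
    by_cases hy0 : y = 0
    · exact ⟨0, fun m _ => by simpa [hy0] using sum_nonneg fun i _ => hc i⟩
    · exact eventually_atTop.1 <|
        ((not_summable_iff_tendsto_nat_atTop_of_nonneg hc).1 (hy hy0)).eventually_ge_atTop |y|
  convert hasSum_sum_of_ne_finset_zero (L := .unconditional ℕ) (s := range M) fun m hm => ?_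
    using 1
  · rw [sum_range_sub (fun m => truncate (∑ i ∈ range m, c i) y),
      truncate_of_abs_le (hM M le_rfl), range_zero, sum_empty, truncate_zero_left, sub_zero]
  · rw [mem_range, not_lt] at hm
    rw [truncate_of_abs_le (hM _ (hm.trans m.le_succ)), truncate_of_abs_le (hM _ hm), sub_self]

variable {n : ℕ} {p : ℝ} {s : ℝ≥0∞} {w : (Fin n → ℝ) → ℝ}

lemma IsBlock.mono {h b : (Fin n → ℝ) → ℝ} (hh : IsBlock p s w h)
    (hb : AEMeasurable b volume) (hle : ∀ x, |b x| ≤ |h x|) : IsBlock p s w b := by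
  obtain ⟨-, c, l, hl, hsupp, hnorm⟩ := hh
  refine ⟨hb, c, l, hl, fun x hx => hsupp ?_, (eLpNorm_mono fun x => hle x).trans hnorm⟩
  simpa using (abs_pos.2 hx).trans_le (hle x)

lemma IsBlock.indicator {h : (Fin n → ℝ) → ℝ} (hh : IsBlock p s w h)
    {E : Set (Fin n → ℝ)} (hE : NullMeasurableSet E volume) : IsBlock p s w (E.indicator h) :=
  hh.mono (hh.1.indicator₀ hE) fun x => by
    by_cases hx : x ∈ E <;> simp [hx]

def HasBlockDecomp (p : ℝ) (s : ℝ≥0∞) (w : (Fin n → ℝ) → ℝ) {ι : Type*}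
    (f : (Fin n → ℝ) → ℝ) (lam : ι → ℝ) (h : ι → (Fin n → ℝ) → ℝ) : Prop :=
  (∀ k, IsBlock p s w (h k)) ∧ Summable (fun k => |lam k| ^ min p 1) ∧
    ∀ᵐ x ∂volume, HasSum (fun k => lam k * h k x) (f x)

namespace HasBlockDecomp

variable {ι κ : Type*} {f g : (Fin n → ℝ) → ℝ} {lam : ι → ℝ} {h : ι → (Fin n → ℝ) → ℝ}

lemma congr_ae (hd : HasBlockDecomp p s w f lam h) (hfg : ∀ᵐ x ∂volume, g x = f x) :
    HasBlockDecomp p s w g lam h :=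
  ⟨hd.1, hd.2.1, by filter_upwards [hd.2.2, hfg] with x hx hfgx; rwa [hfgx]⟩

lemma comp_equiv (hd : HasBlockDecomp p s w f lam h) (e : κ ≃ ι) :
    HasBlockDecomp p s w f (lam ∘ e) (h ∘ e) :=
  ⟨fun k => hd.1 (e k), (e.summable_iff.2 hd.2.1 :),
    hd.2.2.mono fun _ hx => (e.hasSum_iff.2 hx :)⟩

lemma neg (hd : HasBlockDecomp p s w f lam h) :
    HasBlockDecomp p s w (fun x => -f x) (fun k => -lam k) h :=
  ⟨hd.1, by simpa using hd.2.1, hd.2.2.mono fun x hx => by simpa using hx.neg⟩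

lemma add {lam' : κ → ℝ} {h' : κ → (Fin n → ℝ) → ℝ} (hd : HasBlockDecomp p s w f lam h)
    (hd' : HasBlockDecomp p s w g lam' h') :
    HasBlockDecomp p s w (fun x => f x + g x) (Sum.elim lam lam') (Sum.elim h h') :=
  ⟨Sum.rec hd.1 hd'.1, Summable.sum _ hd.2.1 hd'.2.1,
    by filter_upwards [hd.2.2, hd'.2.2] with x hx hx' using hx.sum hx'⟩

lemma exists_bhdecomp [Denumerable ι] (hd : HasBlockDecomp p s w f lam h) :
    ∃ lam' h', BHdecomp p s w f lam' h' ∧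
      ∑' k, |lam' k| ^ min p 1 = ∑' k, |lam k| ^ min p 1 :=
  ⟨_, _, hd.comp_equiv (Denumerable.eqv ι).symm,
    (Denumerable.eqv ι).symm.tsum_eq fun k => |lam k| ^ min p 1⟩

lemma exists_bhdecomp_add [Denumerable ι] [Denumerable κ] {lam' : κ → ℝ}
    {h' : κ → (Fin n → ℝ) → ℝ} (hd : HasBlockDecomp p s w f lam h)
    (hd' : HasBlockDecomp p s w g lam' h') :
    ∃ lam'' h'', BHdecomp p s w (fun x => f x + g x) lam'' h'' ∧
      ∑' k, |lam'' k| ^ min p 1 = ∑' k, |lam k| ^ min p 1 + ∑' k, |lam' k| ^ min p 1 := by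
  obtain ⟨lam'', h'', hd'', hsum⟩ := (hd.add hd').exists_bhdecomp
  exact ⟨lam'', h'', hd'', hsum.trans
    (Summable.tsum_sum (f := fun k => |Sum.elim lam lam' k| ^ min p 1) hd.2.1 hd'.2.1)⟩

lemma memBH [Denumerable ι] (hd : HasBlockDecomp p s w f lam h) : MemBH p s w f :=
  let ⟨lam', h', hd', _⟩ := hd.exists_bhdecomp
  ⟨lam', h', hd'⟩

end HasBlockDecomp

namespace MemBH

variable {f g : (Fin n → ℝ) → ℝ}

lemma add (hf : MemBH p s w f) (hg : MemBH p s w g) : MemBH p s w (fun x => f x + g x) :=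
  let ⟨_, _, hdf⟩ := hf
  let ⟨_, _, hdg⟩ := hg
  HasBlockDecomp.memBH (HasBlockDecomp.add hdf hdg)

lemma sub (hf : MemBH p s w f) (hg : MemBH p s w g) : MemBH p s w (fun x => f x - g x) := by
  obtain ⟨_, _, hdg⟩ := hg
  simpa [sub_eq_add_neg] using hf.add ⟨_, _, HasBlockDecomp.neg hdg⟩

lemma aemeasurable (hf : MemBH p s w f) : AEMeasurable f volume := by
  obtain ⟨lam, h, hblock, -, hsum⟩ := hf
  exact aemeasurable_of_tendsto_metrizable_ae' (fun N =>
    Finset.aemeasurable_fun_sum _ fun k _ => (hblock k).1.const_mul _)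
    (hsum.mono fun _ hx => hx.tendsto_sum_nat)

end MemBH

lemma bhnorm_nonneg (f : (Fin n → ℝ) → ℝ) : 0 ≤ BHnorm p s w f :=
  Real.sInf_nonneg fun _ ⟨_, _, _, ht⟩ => ht ▸ by positivity

lemma bhnorm_le_of_bhdecomp (hp : 0 < p) {f : (Fin n → ℝ) → ℝ} {lam : ℕ → ℝ}
    {h : ℕ → (Fin n → ℝ) → ℝ} (hd : BHdecomp p s w f lam h) {t : ℝ} (ht : 0 ≤ t)
    (hsum : ∑' k, |lam k| ^ min p 1 ≤ t ^ min p 1) : BHnorm p s w f ≤ t := by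
  unfold BHnorm
  refine (csInf_le ⟨0, ?_⟩ (by exact ⟨lam, h, hd, rfl⟩)).trans ?_
  · rintro _ ⟨_, _, _, rfl⟩
    positivity
  · rwa [one_div, Real.rpow_inv_le_iff_of_pos (by positivity) ht (lt_min hp one_pos)]

lemma exists_bhdecomp_of_bhnorm_lt (hp : 0 < p) {f : (Fin n → ℝ) → ℝ} (hf : MemBH p s w f)
    {t : ℝ} (hft : BHnorm p s w f < t) :
    ∃ lam h, BHdecomp p s w f lam h ∧ ∑' k, |lam k| ^ min p 1 < t ^ min p 1 := by
  obtain ⟨lam₀, h₀, hd₀⟩ := hf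
  unfold BHnorm at hft
  obtain ⟨_, ⟨lam, h, hd, rfl⟩, hlt⟩ :=
    exists_lt_of_csInf_lt (by exact ⟨_, lam₀, h₀, hd₀, rfl⟩) hft
  have hsum : 0 ≤ ∑' k, |lam k| ^ min p 1 := tsum_nonneg fun _ => by positivity
  refine ⟨lam, h, hd, ?_⟩
  rwa [one_div, Real.rpow_inv_lt_iff_of_pos hsum ((Real.rpow_nonneg hsum _).trans hlt.le)
    (lt_min hp one_pos)] at hlt

lemma exists_monotone_forall_ge_lt {d : ℕ → ℕ → ℝ}
    (hd : ∀ ε > 0, ∃ N, ∀ m ≥ N, ∀ k ≥ N, d m k ≤ ε) {ε : ℕ → ℝ} (hε : ∀ J, 0 < ε J) :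
    ∃ κ : ℕ → ℕ, Monotone κ ∧ ∀ J, ∀ m ≥ κ J, d m (κ J) < ε J := by
  choose N hN using fun J => hd (ε J / 2) (half_pos (hε J))
  refine ⟨fun J => (range (J + 1)).sup N,
    fun J J' hJ => sup_mono (range_subset_range.2 (by omega)), fun J m hm => ?_⟩
  have hNJ : N J ≤ (range (J + 1)).sup N := le_sup (mem_range.2 J.lt_succ_self)
  exact (hN J m (hNJ.trans hm) _ hNJ).trans_lt (half_lt_self (hε J))

lemma nullMeasurableSet_summable {α ι : Type*} [MeasurableSpace α] {μ : Measure α}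
    [Countable ι] {u : ι → α → ℝ} (hu : ∀ i, AEMeasurable (u i) μ) :
    NullMeasurableSet {x | Summable fun i => u i x} μ := by
  have : {x | Summable fun i => u i x} = (fun x => ∑' i, ‖u i x‖ₑ) ⁻¹' {∞}ᶜ := by
    ext x
    simp [tsum_enorm_ne_top_iff_summable_norm, summable_abs_iff]
  rw [this]
  exact (AEMeasurable.tsum fun i => (hu i).enorm).nullMeasurable
    (measurableSet_singleton _).compl

lemma tsum_eq_sub_add_tsum_shift {G : Type*} [NormedAddCommGroup G] [CompleteSpace G]
    {v : ℕ × ℕ → G} {F : ℕ → G} (hv : Summable v)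
    (hrow : ∀ j, HasSum (fun i => v (j, i)) (F (j + 1) - F j)) (J : ℕ) :
    ∑' ji, v ji = F J - F 0 + ∑' ji : ℕ × ℕ, v (ji.1 + J, ji.2) := by
  have hshift : Summable fun ji : ℕ × ℕ => v (ji.1 + J, ji.2) :=
    hv.comp_injective fun a b hab => by simpa [Prod.ext_iff] using hab
  rw [hv.tsum_prod' hv.prod_factor, hshift.tsum_prod' hshift.prod_factor,
    ← hv.prod.sum_add_tsum_nat_add J]
  simp only [(hrow _).tsum_eq, sum_range_sub]

lemma summable_uncurry_of_tsum_le {b : ℕ → ℕ → ℝ} {r : ℕ → ℝ} (hb : ∀ j i, 0 ≤ b j i)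
    (hrow : ∀ j, Summable (b j)) (hbr : ∀ j, ∑' i, b j i ≤ r j) (hr : Summable r) :
    Summable fun ji : ℕ × ℕ => b ji.1 ji.2 :=
  (summable_prod_of_nonneg fun ji => hb ji.1 ji.2).2
    ⟨hrow, hr.of_nonneg_of_le (fun j => tsum_nonneg (hb j)) hbr⟩

lemma tsum_uncurry_le {b : ℕ → ℕ → ℝ} {r : ℕ → ℝ} (hb : ∀ j i, 0 ≤ b j i)
    (hrow : ∀ j, Summable (b j)) (hbr : ∀ j, ∑' i, b j i ≤ r j) (hr : Summable r) :
    ∑' ji : ℕ × ℕ, b ji.1 ji.2 ≤ ∑' j, r j := by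
  rw [(summable_uncurry_of_tsum_le hb hrow hbr hr).tsum_prod' hrow]
  exact Summable.tsum_le_tsum hbr (hr.of_nonneg_of_le (fun j => tsum_nonneg (hb j)) hbr) hr

lemma tsum_uncurry_shift_le_geometric {b : ℕ → ℕ → ℝ} (hb : ∀ j i, 0 ≤ b j i)
    (hrow : ∀ j, Summable (b j)) (hbr : ∀ j, ∑' i, b j i ≤ ((1 : ℝ) / 2) ^ j) (J : ℕ) :
    ∑' ji : ℕ × ℕ, b (ji.1 + J) ji.2 ≤ 2 * ((1 : ℝ) / 2) ^ J := by
  refine (tsum_uncurry_le (b := fun j i => b (j + J) i)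
    (r := fun j => ((1 : ℝ) / 2) ^ J * ((1 : ℝ) / 2) ^ j) (fun _ _ => hb _ _) (fun _ => hrow _)
    (fun j => ?_) (summable_geometric_two.mul_left _)).trans_eq ?_
  · rw [← pow_add, add_comm]
    exact hbr _
  · rw [tsum_mul_left, tsum_geometric_two, mul_comm]

lemma hasBlockDecomp_indicator_tsum {ι : Type*} {a : ι → ℝ} {H : ι → (Fin n → ℝ) → ℝ}
    (hH : ∀ i, IsBlock p s w (H i)) (ha : Summable fun i => |a i| ^ min p 1)
    {E : Set (Fin n → ℝ)} (hE : NullMeasurableSet E volume)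
    (hsum : ∀ x ∈ E, Summable fun i => a i * H i x) :
    HasBlockDecomp p s w (E.indicator fun x => ∑' i, a i * H i x) a
      (fun i => E.indicator (H i)) := by
  refine ⟨fun i => (hH i).indicator hE, ha, Eventually.of_forall fun x => ?_⟩
  by_cases hx : x ∈ E
  · simpa [hx] using (hsum x hx).hasSum
  · simp [hx]

lemma memBH_tsum {ι : Type*} [Denumerable ι] {a : ι → ℝ} {H : ι → (Fin n → ℝ) → ℝ}
    (hH : ∀ i, IsBlock p s w (H i)) (ha : Summable fun i => |a i| ^ min p 1) :
    MemBH p s w fun x => ∑' i, a i * H i x := by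
  convert (hasBlockDecomp_indicator_tsum hH ha
    (nullMeasurableSet_summable fun i => (hH i).1.const_mul (a i)) fun _ hx => hx).memBH using 1
  exact (Set.indicator_eq_self.2 fun x hx =>
    by_contra fun hx' => hx (tsum_eq_zero_of_not_summable hx')).symm

/-- Truncate `φ x` at the partial sums of `θ * |a m * H m x|`: these diverge wherever
`φ x ≠ 0`, so the truncations eventually reach `φ x`. -/
lemma exists_hasBlockDecomp_of_not_summable {a : ℕ → ℝ} {H : ℕ → (Fin n → ℝ) → ℝ}
    (hH : ∀ m, IsBlock p s w (H m)) (ha : Summable fun m => |a m| ^ min p 1)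
    {φ : (Fin n → ℝ) → ℝ} (hφ : AEMeasurable φ volume)
    (hdiv : ∀ x, φ x ≠ 0 → ¬Summable fun m => a m * H m x) {θ : ℝ} (hθ : 0 < θ) :
    ∃ B, HasBlockDecomp p s w φ (fun m => θ * a m) B := by
  set c : ℕ → (Fin n → ℝ) → ℝ := fun m x => |θ * a m * H m x|
  set t : ℕ → (Fin n → ℝ) → ℝ := fun m x =>
    truncate (∑ i ∈ range (m + 1), c i x) (φ x) - truncate (∑ i ∈ range m, c i x) (φ x)
  have ht : ∀ m x, |t m x| ≤ c m x := fun m x => by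
    simpa [t, c, sum_range_succ] using
      abs_truncate_sub_truncate_le (∑ i ∈ range (m + 1), c i x) (∑ i ∈ range m, c i x) (φ x)
  have hmul : ∀ m x, θ * a m * (t m x / (θ * a m)) = t m x := fun m x => by
    rcases eq_or_ne (θ * a m) 0 with h0 | h0
    · have : t m x = 0 :=
        abs_nonpos_iff.1 ((ht m x).trans_eq (by simp only [c, h0, zero_mul, abs_zero]))
      simp [h0, this]
    · exact mul_div_cancel₀ _ h0
  refine ⟨fun m x => t m x / (θ * a m), fun m => (hH m).mono ?_ fun x => ?_, ?_,
    Eventually.of_forall fun x => ?_⟩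
  · have hc : ∀ i, AEMeasurable (c i) volume := fun i => ((hH i).1.const_mul _).abs
    simp only [t, truncate]
    fun_prop
  · rw [abs_div]
    refine div_le_of_le_mul₀ (abs_nonneg _) (abs_nonneg _) ((ht m x).trans_eq ?_)
    simp only [c, abs_mul]
    ring
  · refine (ha.mul_left (θ ^ min p 1)).congr fun m => ?_
    rw [abs_mul, Real.mul_rpow (abs_nonneg θ) (abs_nonneg _), abs_of_pos hθ]
  · simp only [hmul]
    refine hasSum_truncate_sub (fun m => abs_nonneg _) fun hx hc => hdiv x hx ?_
    have := summable_abs_iff.1 hc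
    simp only [mul_assoc] at this
    exact (summable_mul_left_iff hθ.ne').1 this

/-- On the set `E` where the double series converges absolutely, `F J - (F 0 + ∑ a H)` is
minus its tail beyond row `J`; off `E` it is `F J - F 0`, which
`exists_hasBlockDecomp_of_not_summable` expands with arbitrarily small coefficients. -/
lemma exists_bhdecomp_sub_tsum_le (hp : 0 < p) {F : ℕ → (Fin n → ℝ) → ℝ} {a : ℕ → ℕ → ℝ}
    {H : ℕ → ℕ → (Fin n → ℝ) → ℝ} (hF : ∀ j, AEMeasurable (F j) volume)
    (hH : ∀ j i, IsBlock p s w (H j i))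
    (ha : Summable fun ji : ℕ × ℕ => |a ji.1 ji.2| ^ min p 1)
    (hrow : ∀ j, ∀ᵐ x ∂volume, HasSum (fun i => a j i * H j i x) (F (j + 1) x - F j x))
    (J : ℕ) {η : ℝ} (hη : 0 < η) :
    ∃ lam h, BHdecomp p s w
        (fun x => F J x - (F 0 x + ∑' ji : ℕ × ℕ, a ji.1 ji.2 * H ji.1 ji.2 x)) lam h ∧
      ∑' k, |lam k| ^ min p 1 ≤ ∑' ji : ℕ × ℕ, |a (ji.1 + J) ji.2| ^ min p 1 + η := by
  set E := {x | Summable fun ji : ℕ × ℕ => a ji.1 ji.2 * H ji.1 ji.2 x}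
  have hE : NullMeasurableSet E volume :=
    nullMeasurableSet_summable fun ji => (hH ji.1 ji.2).1.const_mul _
  have hshift : Function.Injective fun ji : ℕ × ℕ => (ji.1 + J, ji.2) := fun _ _ hji => by
    simpa [Prod.ext_iff] using hji
  have hta : Summable fun ji : ℕ × ℕ => |a (ji.1 + J) ji.2| ^ min p 1 :=
    (ha.comp_injective hshift :)
  have htail := hasBlockDecomp_indicator_tsum (a := fun ji : ℕ × ℕ => -a (ji.1 + J) ji.2)
    (H := fun ji => H (ji.1 + J) ji.2) (fun _ => hH _ _)
    (by simpa only [abs_neg] using hta) hE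
    fun x hx => by simpa [neg_mul] using (hx.comp_injective hshift).neg
  set e := Denumerable.eqv (ℕ × ℕ)
  set A := ∑' ji : ℕ × ℕ, |a ji.1 ji.2| ^ min p 1
  have hA : 0 ≤ A := tsum_nonneg fun _ => by positivity
  set θ := (η / (A + 1)) ^ (min p 1)⁻¹
  have hθ : 0 < θ := by positivity
  have hθA : θ ^ min p 1 * A ≤ η := by
    rw [Real.rpow_inv_rpow (by positivity) (lt_min hp one_pos).ne', div_mul_eq_mul_div,
      div_le_iff₀ (by positivity)]
    nlinarith
  have hae : Summable fun m => |a (e.symm m).1 (e.symm m).2| ^ min p 1 :=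
    (e.symm.summable_iff.2 ha :)
  have hdiv : ∀ x, (Eᶜ.indicator fun x => F J x - F 0 x) x ≠ 0 →
      ¬Summable fun m => a (e.symm m).1 (e.symm m).2 * H (e.symm m).1 (e.symm m).2 x :=
    fun x hx => (e.symm.summable_iff.not.2 (Set.mem_of_indicator_ne_zero hx) :)
  obtain ⟨B, hB⟩ := exists_hasBlockDecomp_of_not_summable
    (a := fun m => a (e.symm m).1 (e.symm m).2) (H := fun m => H (e.symm m).1 (e.symm m).2)
    (φ := Eᶜ.indicator fun x => F J x - F 0 x) (fun _ => hH _ _) hae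
    (((hF J).sub (hF 0)).indicator₀ hE.compl) hdiv hθ
  obtain ⟨lam, h, hd, hsum⟩ := htail.exists_bhdecomp_add hB
  refine ⟨lam, h, HasBlockDecomp.congr_ae hd ?_, ?_⟩
  · filter_upwards [ae_all_iff.2 hrow] with x hx
    by_cases hxE : x ∈ E
    · rw [tsum_eq_sub_add_tsum_shift (F := fun j => F j x) hxE hx J]
      simp [hxE, tsum_neg]
      ring
    · simp [hxE, tsum_eq_zero_of_not_summable hxE]
  · rw [hsum]
    simp_rw [abs_neg, abs_mul, Real.mul_rpow (abs_nonneg _) (abs_nonneg _), abs_of_pos hθ,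
      tsum_mul_left]
    rw [e.symm.tsum_eq (fun ji : ℕ × ℕ => |a ji.1 ji.2| ^ min p 1)]
    linarith

theorem stmt_12_general {n : ℕ} (p : ℝ) (s : ℝ≥0∞) (hp : 0 < p)
    (w : (Fin n → ℝ) → ℝ)
    (f : ℕ → (Fin n → ℝ) → ℝ) (hf : ∀ k, MemBH p s w (f k))
    (hCauchy : ∀ ε > 0, ∃ N, ∀ m ≥ N, ∀ k ≥ N,
      BHnorm p s w (fun x => f m x - f k x) ≤ ε) :
    ∃ g : (Fin n → ℝ) → ℝ, MemBH p s w g ∧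
      Filter.Tendsto (fun k => BHnorm p s w (fun x => f k x - g x))
        Filter.atTop (nhds 0) := by
  obtain ⟨κ, hκ_mono, hκ⟩ := exists_monotone_forall_ge_lt hCauchy
    (ε := fun J => (((1 : ℝ) / 2) ^ J) ^ (min p 1)⁻¹) fun J => by positivity
  have hdecomp : ∀ J, ∀ m ≥ κ J, ∃ lam h, BHdecomp p s w (fun x => f m x - f (κ J) x) lam h ∧
      ∑' k, |lam k| ^ min p 1 < ((1 : ℝ) / 2) ^ J := fun J m hm => by
    have := exists_bhdecomp_of_bhnorm_lt hp ((hf m).sub (hf (κ J))) (hκ J m hm)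
    rwa [Real.rpow_inv_rpow (by positivity) (lt_min hp one_pos).ne'] at this
  choose a H had hS using fun j => hdecomp j _ (hκ_mono j.le_succ)
  have hrow : ∀ j, Summable fun i => |a j i| ^ min p 1 := fun j => (had j).2.1
  have ha := summable_uncurry_of_tsum_le (fun _ _ => by positivity) hrow (fun j => (hS j).le)
    summable_geometric_two
  have htail := tsum_uncurry_shift_le_geometric (fun _ _ => by positivity) hrow fun j => (hS j).le
  refine ⟨fun x => f (κ 0) x + ∑' ji : ℕ × ℕ, a ji.1 ji.2 * H ji.1 ji.2 x,
    (hf _).add (memBH_tsum (fun ji => (had ji.1).1 ji.2) ha), tendsto_order.2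
    ⟨fun δ hδ => .of_forall fun k => hδ.trans_le (bhnorm_nonneg _), fun δ hδ => ?_⟩⟩
  obtain ⟨J, hJ⟩ := exists_pow_lt_of_lt_one (show 0 < (δ / 2) ^ min p 1 / 4 by positivity)
    (show (1 : ℝ) / 2 < 1 by norm_num)
  filter_upwards [eventually_ge_atTop (κ J)] with k hk
  obtain ⟨l₁, h₁, hd₁, hS₁⟩ := hdecomp J k hk
  obtain ⟨l₂, h₂, hd₂, hS₂⟩ := exists_bhdecomp_sub_tsum_le hp (F := fun j => f (κ j))
    (fun j => (hf _).aemeasurable) (fun j i => (had j).1 i) ha (fun j => (had j).2.2) J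
    (η := ((1 : ℝ) / 2) ^ J) (by positivity)
  obtain ⟨l, h, hd, hS⟩ := HasBlockDecomp.exists_bhdecomp_add hd₁ hd₂
  refine (bhnorm_le_of_bhdecomp hp (HasBlockDecomp.congr_ae hd (.of_forall fun x => by ring))
    (by positivity) ?_).trans_lt (half_lt_self hδ)
  linarith [htail J]

/-- Completeness of the block space `BH^{p,s}_w`: every Cauchy sequence (in the
`BH^{p,s}_w` quasi-norm) converges to an element of `BH^{p,s}_w`. -/
theorem stmt_12 {n : ℕ} (p : ℝ) (s : ℝ≥0∞) (hp : 0 < p) (hs : 0 < s)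
    (w : (Fin n → ℝ) → ℝ) (hw : ∀ x, 0 ≤ w x) (hloc : LocallyIntegrable w volume)
    (f : ℕ → (Fin n → ℝ) → ℝ) (hf : ∀ k, MemBH p s w (f k))
    (hCauchy : ∀ ε > 0, ∃ N, ∀ m ≥ N, ∀ k ≥ N,
      BHnorm p s w (fun x => f m x - f k x) ≤ ε) :
    ∃ g : (Fin n → ℝ) → ℝ, MemBH p s w g ∧
      Filter.Tendsto (fun k => BHnorm p s w (fun x => f k x - g x))
        Filter.atTop (nhds 0) :=
  stmt_12_general p s hp w f hf hCauchy
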